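/- arXiv:2210.03284 — 3 statements merged into one kernel-verified Lean document; each statement's English description precedes it below -/
import Mathlib

section
/- For every integer m ≥ 2 there exist elements f₁ and f₀ in the subalgebra of R generated by w₂² and w₃² such that for every x in the subalgebra A of R generated by w₂ and w₃ one has Q_m(x) = f₁ · Q_1(x) + f₀ · Q_0(x). -/
/-!
`s₁` and `s₂` are roots of the Dickson polynomial `t⁴ + w₂ t² + w₃ t = ∏_{v ∈ ⟨s₁, s₂⟩} (t + v)`.
Raising `sᵢ⁴ = w₂ sᵢ² + w₃ sᵢ` to the `2^(m+1)`-th power (Frobenius) shows that the derivations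
`Q_{m+2}` and `w₂^(2^(m+1)) Q_{m+1} + w₃^(2^(m+1)) Q_m` agree on `s₁, s₂`, hence on all of `R`.
Since the coefficients of this recurrence lie in `ℤ/2[w₂², w₃²]`, induction on `m` expresses every
`Q_m` as a combination of `Q_1` and `Q_0` with coefficients there.
-/

open MvPolynomial

/-- `R = ℤ/2[s₁, s₂]`, the mod 2 cohomology of `B(ℤ/2)²`. -/
noncomputable abbrev R : Type := MvPolynomial (Fin 2) (ZMod 2)

/-- The `m`-th Milnor operation `Q_m`, the derivation with `Q_m(sᵢ) = sᵢ^(2^(m+1))`. -/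
noncomputable def Q (m : ℕ) : Derivation (ZMod 2) R R :=
  MvPolynomial.mkDerivation (ZMod 2) (fun i : Fin 2 => (X i : R) ^ 2 ^ (m + 1))

/-- `w₂ = s₁² + s₁s₂ + s₂²`. -/
noncomputable def w₂ : R := X 0 ^ 2 + X 0 * X 1 + X 1 ^ 2

/-- `w₃ = s₁²s₂ + s₁s₂²`. -/
noncomputable def w₃ : R := X 0 ^ 2 * X 1 + X 0 * X 1 ^ 2

theorem pow_two_pow_add_two_of_pow_four_eq {S : Type*} [CommRing S] [CharP S 2] {a b c : S}
    (h : a ^ 4 = b * a ^ 2 + c * a) (m : ℕ) :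
    a ^ 2 ^ (m + 2) = b ^ 2 ^ m * a ^ 2 ^ (m + 1) + c ^ 2 ^ m * a ^ 2 ^ m := by
  have h' := congrArg (· ^ 2 ^ m) h
  simp only [add_pow_char_pow, mul_pow, ← pow_mul] at h'
  convert h' using 3 <;> ring

theorem pow_two_pow_succ_mem {S A : Type*} [CommSemiring S] [Semiring A] [Algebra S A]
    {B : Subalgebra S A} {a : A} (ha : a ^ 2 ∈ B) (m : ℕ) : a ^ 2 ^ (m + 1) ∈ B := by
  rw [pow_succ', pow_mul]
  exact pow_mem ha _

theorem exists_eq_smul_add_smul_of_recurrence {S M T : Type*} [CommSemiring S] [AddCommMonoid M]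
    [Module S M] [SetLike T S] [SubsemiringClass T S] {B : T} {D : ℕ → M} {a b : ℕ → S}
    (ha : ∀ m, a m ∈ B) (hb : ∀ m, b m ∈ B)
    (hD : ∀ m, D (m + 2) = a m • D (m + 1) + b m • D m) (m : ℕ) :
    ∃ f₁ ∈ B, ∃ f₀ ∈ B, D m = f₁ • D 1 + f₀ • D 0 := by
  induction m using Nat.twoStepInduction with
  | zero => exact ⟨0, zero_mem B, 1, one_mem B, by simp⟩
  | one => exact ⟨1, one_mem B, 0, zero_mem B, by simp⟩
  | more m ih ih' =>
    obtain ⟨f₁, hf₁, f₀, hf₀, hm⟩ := ih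
    obtain ⟨g₁, hg₁, g₀, hg₀, hm'⟩ := ih'
    refine ⟨a m * g₁ + b m * f₁, add_mem (mul_mem (ha m) hg₁) (mul_mem (hb m) hf₁),
      a m * g₀ + b m * f₀, add_mem (mul_mem (ha m) hg₀) (mul_mem (hb m) hf₀), ?_⟩
    rw [hD, hm, hm']
    module

theorem X_pow_four (i : Fin 2) : (X i : R) ^ 4 = w₂ * X i ^ 2 + w₃ * X i := by
  have h2 : (2 : R) = 0 := CharTwo.two_eq_zero
  unfold w₂ w₃
  match i with
  | 0 => linear_combination (-(X 0 ^ 3 * X 1 + X 0 ^ 2 * X 1 ^ 2) : R) * h2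
  | 1 => linear_combination (-(X 0 * X 1 ^ 3 + X 0 ^ 2 * X 1 ^ 2) : R) * h2

theorem Q_add_two (m : ℕ) : Q (m + 2) = w₂ ^ 2 ^ (m + 1) • Q (m + 1) + w₃ ^ 2 ^ (m + 1) • Q m := by
  refine MvPolynomial.derivation_ext fun i => ?_
  simp only [Q, Derivation.add_apply, Derivation.smul_apply, mkDerivation_X, smul_eq_mul]
  exact pow_two_pow_add_two_of_pow_four_eq (X_pow_four i) (m + 1)

theorem exists_Q_eq (m : ℕ) :
    ∃ f₁ ∈ Algebra.adjoin (ZMod 2) ({w₂ ^ 2, w₃ ^ 2} : Set R),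
      ∃ f₀ ∈ Algebra.adjoin (ZMod 2) ({w₂ ^ 2, w₃ ^ 2} : Set R), Q m = f₁ • Q 1 + f₀ • Q 0 :=
  exists_eq_smul_add_smul_of_recurrence
    (fun m => pow_two_pow_succ_mem (Algebra.subset_adjoin (by simp)) m)
    (fun m => pow_two_pow_succ_mem (Algebra.subset_adjoin (by simp)) m) Q_add_two m

theorem stmt_2_general (m : ℕ) :
    ∃ f₁ ∈ Algebra.adjoin (ZMod 2) ({w₂ ^ 2, w₃ ^ 2} : Set R),
      ∃ f₀ ∈ Algebra.adjoin (ZMod 2) ({w₂ ^ 2, w₃ ^ 2} : Set R),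
        ∀ x ∈ Algebra.adjoin (ZMod 2) ({w₂, w₃} : Set R),
          Q m x = f₁ * Q 1 x + f₀ * Q 0 x := by
  obtain ⟨f₁, hf₁, f₀, hf₀, hQ⟩ := exists_Q_eq m
  exact ⟨f₁, hf₁, f₀, hf₀, fun x _ => by rw [hQ]; rfl⟩

theorem stmt_2 (m : ℕ) (hm : 2 ≤ m) :
    ∃ f₁ ∈ Algebra.adjoin (ZMod 2) ({w₂ ^ 2, w₃ ^ 2} : Set R),
      ∃ f₀ ∈ Algebra.adjoin (ZMod 2) ({w₂ ^ 2, w₃ ^ 2} : Set R),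
        ∀ x ∈ Algebra.adjoin (ZMod 2) ({w₂, w₃} : Set R),
          Q m x = f₁ * Q 1 x + f₀ * Q 0 x :=
  stmt_2_general m
end

section
/- For every m ≥ 0, the subalgebra A of R generated by w₂ and w₃ is closed under Q_m; that is, Q_m(x) ∈ A for every x ∈ A. -/
/-!
Both `s₁` and `s₂` are roots of the Dickson polynomial
`T (T + s₁) (T + s₂) (T + s₁ + s₂) = T⁴ + w₂ T² + w₃ T`. Applying Frobenius `k` times gives
`sᵢ^(2^(k+2)) = w₂^(2^k) sᵢ^(2^(k+1)) + w₃^(2^k) sᵢ^(2^k)`, so the elements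
`d_k = s₁^(2^k) s₂ + s₁ s₂^(2^k)` obey a linear recurrence with coefficients in `A` and start with
`d₀ = 0`, `d₁ = w₃`; hence all lie in `A`. Since `Q_m(w₂) = d_(m+1)` and `Q_m(w₃) = d_m²`, the
derivation `Q_m` maps the generators of `A`, and therefore all of `A`, into `A`.
-/

open MvPolynomial

theorem Derivation.map_mem_adjoin {K S : Type*} [CommSemiring K] [CommSemiring S] [Algebra K S]
    (D : Derivation K S S) {s : Set S} (hs : ∀ y ∈ s, D y ∈ Algebra.adjoin K s) {x : S}
    (hx : x ∈ Algebra.adjoin K s) : D x ∈ Algebra.adjoin K s := by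
  induction hx using Algebra.adjoin_induction with
  | mem y hy => exact hs y hy
  | algebraMap r => simp
  | add a b _ _ iha ihb => rw [map_add]; exact add_mem iha ihb
  | mul a b ha hb iha ihb =>
    rw [Derivation.leibniz, smul_eq_mul, smul_eq_mul]
    exact add_mem (mul_mem ha ihb) (mul_mem hb iha)

def mixedFrob {S : Type*} [Semiring S] (a b : S) (k : ℕ) : S := a ^ 2 ^ k * b + a * b ^ 2 ^ k

section CharTwo

variable {S : Type*} [CommRing S] [CharP S 2]

theorem pow_four_eq_dickson (a b : S) :
    a ^ 4 = (a ^ 2 + a * b + b ^ 2) * a ^ 2 + (a ^ 2 * b + a * b ^ 2) * a := by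
  linear_combination (-(a ^ 3 * b + a ^ 2 * b ^ 2)) * CharTwo.two_eq_zero (R := S)

theorem pow_two_pow_add_two_eq_dickson (a b : S) (k : ℕ) :
    a ^ 2 ^ (k + 2) = (a ^ 2 + a * b + b ^ 2) ^ 2 ^ k * a ^ 2 ^ (k + 1)
      + (a ^ 2 * b + a * b ^ 2) ^ 2 ^ k * a ^ 2 ^ k := by
  rw [show 2 ^ (k + 2) = 4 * 2 ^ k by ring, pow_mul, pow_four_eq_dickson a b,
    add_pow_char_pow, mul_pow, mul_pow, ← pow_mul, ← pow_succ']

theorem mixedFrob_add_two (a b : S) (k : ℕ) :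
    mixedFrob a b (k + 2) = (a ^ 2 + a * b + b ^ 2) ^ 2 ^ k * mixedFrob a b (k + 1)
      + (a ^ 2 * b + a * b ^ 2) ^ 2 ^ k * mixedFrob a b k := by
  have ha := pow_two_pow_add_two_eq_dickson a b k
  have hb := pow_two_pow_add_two_eq_dickson b a k
  rw [show b ^ 2 + b * a + a ^ 2 = a ^ 2 + a * b + b ^ 2 by ring,
    show b ^ 2 * a + b * a ^ 2 = a ^ 2 * b + a * b ^ 2 by ring] at hb
  unfold mixedFrob
  linear_combination b * ha + a * hb

theorem mixedFrob_mem {a b : S} {A : Subsemiring S} (h₂ : a ^ 2 + a * b + b ^ 2 ∈ A)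
    (h₃ : a ^ 2 * b + a * b ^ 2 ∈ A) (k : ℕ) : mixedFrob a b k ∈ A := by
  induction k using Nat.twoStepInduction with
  | zero => simp [mixedFrob, CharTwo.add_self_eq_zero]
  | one => simpa [mixedFrob] using h₃
  | more k ih₀ ih₁ =>
    rw [mixedFrob_add_two]
    exact add_mem (mul_mem (pow_mem h₂ _) ih₁) (mul_mem (pow_mem h₃ _) ih₀)

variable {K : Type*} [CommSemiring K] [Algebra K S] (D : Derivation K S S) (a b : S)

theorem Derivation.map_sq_add_mul_add_sq :
    D (a ^ 2 + a * b + b ^ 2) = D a * b + a * D b := by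
  simp only [map_add, Derivation.leibniz, Derivation.leibniz_pow, smul_eq_mul, nsmul_eq_mul]
  push_cast
  linear_combination (a * D a + b * D b) * CharTwo.two_eq_zero (R := S)

theorem Derivation.map_sq_mul_add_mul_sq :
    D (a ^ 2 * b + a * b ^ 2) = a ^ 2 * D b + D a * b ^ 2 := by
  simp only [map_add, Derivation.leibniz, Derivation.leibniz_pow, smul_eq_mul, nsmul_eq_mul]
  push_cast
  linear_combination (a * b * D a + a * b * D b) * CharTwo.two_eq_zero (R := S)

end CharTwo

theorem Q_X (m : ℕ) (i : Fin 2) : Q m (X i) = X i ^ 2 ^ (m + 1) :=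
  mkDerivation_X _ _ _

theorem Q_w₂ (m : ℕ) : Q m w₂ = mixedFrob (X 0 : R) (X 1) (m + 1) := by
  rw [w₂, Derivation.map_sq_add_mul_add_sq, Q_X, Q_X, mixedFrob]

theorem Q_w₃ (m : ℕ) : Q m w₃ = mixedFrob (X 0 : R) (X 1) m ^ 2 := by
  rw [w₃, Derivation.map_sq_mul_add_mul_sq, Q_X, Q_X, mixedFrob, CharTwo.add_sq, mul_pow,
    mul_pow, ← pow_mul, ← pow_mul, ← pow_succ, add_comm]

theorem stmt_4 (m : ℕ) (x : R) (hx : x ∈ Algebra.adjoin (ZMod 2) ({w₂, w₃} : Set R)) :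
    Q m x ∈ Algebra.adjoin (ZMod 2) ({w₂, w₃} : Set R) := by
  set A := Algebra.adjoin (ZMod 2) ({w₂, w₃} : Set R)
  have hw₂ : w₂ ∈ A := Algebra.subset_adjoin (by simp)
  have hw₃ : w₃ ∈ A := Algebra.subset_adjoin (by simp)
  have hd (k : ℕ) : mixedFrob (X 0 : R) (X 1) k ∈ A.toSubsemiring := mixedFrob_mem hw₂ hw₃ k
  refine (Q m).map_mem_adjoin ?_ hx
  rintro y (rfl | rfl)
  · rw [Q_w₂]; exact hd (m + 1)
  · rw [Q_w₃]; exact pow_mem (hd m) 2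
end

section
/- With the weight grading wt(a)=0, wt(b)=1, wt(c)=0, wt(d)=1 on S, and N_k := π(weightedHomogeneousSubmodule of weight k): N₀ is the ℤ/2-span of the images π(a^m·c^n) (m,n ≥ 0); N₁ is the ℤ/2-span of the images π(a^m·b) and π(a^m·c^n·d) (m,n ≥ 0); N₂ is the ℤ/2-span of the images π(a^m·b²), π(a^m·c^n·b·d), and π(c^n·d²) (m,n ≥ 0); and in each case the listed family of images is ℤ/2-linearly independent in N (so it is a basis of N_k). -/
/-!
Spanning: `N_k` is spanned by the images of the monomials `aⁱ bʲ cˡ dᵐ` with `j + m = k`, and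
the relation `c b ≡ a d` rewrites `aⁱ bʲ cˡ⁺¹` as `aⁱ⁺¹ bʲ⁻¹ cˡ d` and `aⁱ⁺¹ cˡ d²` as
`aⁱ cˡ⁺¹ b d`, which leaves exactly the listed monomials.

Independence: `a ↦ x, b ↦ x t, c ↦ y, d ↦ y t` defines a map `S → 𝔽₂[x,y][t]` sending `J`
into `(t³)`, so for `e < 3` the coefficient of `tᵉ` is a linear map `N → 𝔽₂[x,y]`. It sends the
listed monomials of weight `e` to pairwise distinct monomials `xᵖ y^q`.
-/

open MvPolynomial

/-- `S = ℤ/2[a,b,c,d] ≅ H^*(BSO(3)²; ℤ/2)` with `a = w₂'`, `b = w₃'`, `c = w₂''`, `d = w₃''`. -/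
noncomputable abbrev S : Type := MvPolynomial (Fin 4) (ZMod 2)

noncomputable def a : S := X 0
noncomputable def b : S := X 1
noncomputable def c : S := X 2
noncomputable def d : S := X 3

/-- The ideal `J = (a·d + c·b, b·d² + b²·d)` of relations. -/
noncomputable def J : Ideal S := Ideal.span {a * d + c * b, b * d ^ 2 + b ^ 2 * d}

/-- `N = S ⧸ J`, the bottom line of the `E_∞`-term. -/
noncomputable abbrev N : Type := S ⧸ J

/-- The quotient map `π : S → N`. -/
noncomputable def π : S →+* N := Ideal.Quotient.mk J

/-- The weights `wt(a) = 0`, `wt(b) = 1`, `wt(c) = 0`, `wt(d) = 1`. -/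
def wt : Fin 4 → ℕ := ![0, 1, 0, 1]

/-- `N_k`: the image under `π` of the weighted-homogeneous polynomials of weight `k`. -/
noncomputable def Nwt (k : ℕ) : Submodule (ZMod 2) N :=
  Submodule.map (Ideal.Quotient.mkₐ (ZMod 2) J).toLinearMap
    (weightedHomogeneousSubmodule (ZMod 2) wt k)

theorem MvPolynomial.weightedHomogeneousSubmodule_eq_span {σ R M : Type*} [CommSemiring R]
    [AddCommMonoid M] (w : σ → M) (m : M) :
    weightedHomogeneousSubmodule R w m =
      Submodule.span R ((monomial · 1) '' {v | Finsupp.weight w v = m}) := by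
  rw [weightedHomogeneousSubmodule_eq_finsupp_supported,
    AddMonoidAlgebra.supported_eq_span_single]
  rfl

lemma monomial_eq_abcd (v : Fin 4 →₀ ℕ) :
    (monomial v 1 : S) = a ^ v 0 * b ^ v 1 * c ^ v 2 * d ^ v 3 := by
  rw [monomial_eq, C_1, one_mul, Finsupp.prod_fintype _ _ (fun _ => pow_zero _),
    Fin.prod_univ_four]
  rfl

lemma weight_wt (v : Fin 4 →₀ ℕ) : Finsupp.weight wt v = v 1 + v 3 := by
  simp [Finsupp.weight_apply, Finsupp.sum_fintype, Fin.sum_univ_four, wt]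

lemma isWeightedHomogeneous_abcd (i j l m : ℕ) :
    (a ^ i * b ^ j * c ^ l * d ^ m).IsWeightedHomogeneous wt (j + m) := by
  have hX (k : Fin 4) : (X k : S).IsWeightedHomogeneous wt (wt k) :=
    isWeightedHomogeneous_X _ _ _
  simpa [wt, a, b, c, d] using
    ((((hX 0).pow i).mul ((hX 1).pow j)).mul ((hX 2).pow l)).mul ((hX 3).pow m)

lemma π_mem_Nwt {k : ℕ} (i j l m : ℕ) (h : j + m = k) :
    π (a ^ i * b ^ j * c ^ l * d ^ m) ∈ Nwt k :=
  ⟨_, h ▸ isWeightedHomogeneous_abcd i j l m, rfl⟩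

lemma Nwt_le_of_forall_π_mem {k : ℕ} {P : Submodule (ZMod 2) N}
    (hP : ∀ i j l m : ℕ, j + m = k → π (a ^ i * b ^ j * c ^ l * d ^ m) ∈ P) : Nwt k ≤ P := by
  rw [Nwt, weightedHomogeneousSubmodule_eq_span, Submodule.map_span, Submodule.span_le]
  rintro _ ⟨_, ⟨v, hv, rfl⟩, rfl⟩
  rw [Set.mem_ofPred_eq, weight_wt] at hv
  simp only [AlgHom.toLinearMap_apply, Ideal.Quotient.mkₐ_eq_mk, monomial_eq_abcd]
  exact hP _ _ _ _ hv

lemma Nwt_eq_span {k : ℕ} {s : Set N} (hs : s ⊆ Nwt k)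
    (hmono : ∀ i j l m : ℕ, j + m = k →
      π (a ^ i * b ^ j * c ^ l * d ^ m) ∈ Submodule.span (ZMod 2) s) :
    Nwt k = Submodule.span (ZMod 2) s :=
  le_antisymm (Nwt_le_of_forall_π_mem hmono) (Submodule.span_le.mpr hs)

lemma π_mul_c_mul_b (p : S) : π (p * (c * b)) = π (p * (a * d)) := by
  refine Ideal.Quotient.eq.mpr ?_
  rw [CharTwo.sub_eq_add, ← mul_add, add_comm]
  exact Ideal.mul_mem_left _ p (Ideal.subset_span (Or.inl rfl))

abbrev A : Type := MvPolynomial (Fin 2) (ZMod 2)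

local notation "T" => (Polynomial.X : Polynomial A)

-- With `x = X 0`, `y = X 1`, `t = T`: `r₁ ↦ 2 x y t = 0` and `r₂ ↦ x y (x + y) t³`.
noncomputable def φ : S →ₐ[ZMod 2] Polynomial A :=
  aeval ![Polynomial.C (X 0), Polynomial.C (X 0) * T, Polynomial.C (X 1), Polynomial.C (X 1) * T]

lemma X_pow_three_dvd_φ {r : S} (hr : r ∈ J) : T ^ 3 ∣ φ r := by
  suffices J ≤ (Ideal.span {T ^ 3}).comap φ from Ideal.mem_span_singleton.mp (this hr)
  rw [J, Ideal.span_le]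
  rintro _ (rfl | rfl) <;> rw [SetLike.mem_coe, Ideal.mem_comap, Ideal.mem_span_singleton]
  · have h : φ (a * d + c * b) =
        Polynomial.C (X 0 * X 1) * T + Polynomial.C (X 0 * X 1) * T := by
      simp [φ, a, b, c, d]; ring
    rw [h, CharTwo.add_self_eq_zero]
    exact dvd_zero _
  · exact ⟨Polynomial.C (X 0 * X 1 * (X 0 + X 1)), by simp [φ, b, d]; ring⟩

noncomputable def tCoeff (e : Fin 3) : N →ₗ[ZMod 2] A :=
  (J.restrictScalars (ZMod 2)).liftQ
      ((Polynomial.lcoeff A e).restrictScalars (ZMod 2) ∘ₗ φ.toLinearMap)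
      (fun _ hr => Polynomial.X_pow_dvd_iff.mp (X_pow_three_dvd_φ hr) e e.isLt) ∘ₗ
    (Submodule.Quotient.restrictScalarsEquiv (ZMod 2) J).symm.toLinearMap

lemma tCoeff_π (e : Fin 3) (p : S) : tCoeff e (π p) = (φ p).coeff e :=
  rfl

lemma tCoeff_π_of_φ_eq {e : Fin 3} {p : S} {q : A} (h : φ p = Polynomial.C q * T ^ (e : ℕ)) :
    tCoeff e (π p) = q := by
  rw [tCoeff_π, h, Polynomial.coeff_C_mul_X_pow, if_pos rfl]

theorem MvPolynomial.linearIndependent_X_pow_mul_X_pow (R : Type*) [CommSemiring R] :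
    LinearIndependent R fun p : ℕ × ℕ => (X 0 ^ p.1 * X 1 ^ p.2 : MvPolynomial (Fin 2) R) := by
  have hinj : Function.Injective fun p : ℕ × ℕ => Finsupp.single (0 : Fin 2) p.1 + .single 1 p.2 :=
    fun p q h => Prod.ext (by simpa using DFunLike.congr_fun h 0)
      (by simpa using DFunLike.congr_fun h 1)
  convert (basisMonomials (Fin 2) R).linearIndependent.comp _ hinj with p
  simp [coe_basisMonomials, X_pow_eq_monomial, monomial_mul]

lemma linearIndependent_of_tCoeff {ι : Type*} {u : ι → N} (e : Fin 3) (ρ : ι → ℕ × ℕ)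
    (hρ : Function.Injective ρ) (hu : ∀ i, tCoeff e (u i) = X 0 ^ (ρ i).1 * X 1 ^ (ρ i).2) :
    LinearIndependent (ZMod 2) u :=
  .of_comp (tCoeff e) <| by
    rw [show ⇑(tCoeff e) ∘ u = _ from funext hu]
    exact (linearIndependent_X_pow_mul_X_pow (ZMod 2)).comp ρ hρ

lemma Nwt_zero_eq_span :
    Nwt 0 = Submodule.span (ZMod 2) (Set.range fun p : ℕ × ℕ => π (a ^ p.1 * c ^ p.2)) := by
  refine Nwt_eq_span ?_ fun i j l m h => ?_
  · rintro _ ⟨⟨i, l⟩, rfl⟩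
    simpa using π_mem_Nwt i 0 l 0 rfl
  · obtain ⟨rfl, rfl⟩ : j = 0 ∧ m = 0 := by omega
    exact Submodule.subset_span ⟨(i, l), by simp⟩

lemma Nwt_one_eq_span :
    Nwt 1 = Submodule.span (ZMod 2)
      (Set.range (Sum.elim (fun m : ℕ => π (a ^ m * b))
        (fun p : ℕ × ℕ => π (a ^ p.1 * c ^ p.2 * d)))) := by
  refine Nwt_eq_span ?_ fun i j l m h => ?_
  · rintro _ ⟨(i | ⟨i, l⟩), rfl⟩
    · simpa using π_mem_Nwt i 1 0 0 rfl
    · simpa using π_mem_Nwt i 0 l 1 rfl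
  · obtain ⟨rfl, rfl⟩ | ⟨rfl, rfl⟩ : (j = 1 ∧ m = 0) ∨ (j = 0 ∧ m = 1) := by omega
    · rcases l with _ | l
      · exact Submodule.subset_span ⟨.inl i, by simp⟩
      · rw [show a ^ i * b ^ 1 * c ^ (l + 1) * d ^ 0 = a ^ i * c ^ l * (c * b) by ring,
          π_mul_c_mul_b]
        exact Submodule.subset_span ⟨.inr (i + 1, l), congrArg π (by ring)⟩
    · exact Submodule.subset_span ⟨.inr (i, l), by simp⟩

lemma Nwt_two_eq_span :
    Nwt 2 = Submodule.span (ZMod 2)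
      (Set.range (Sum.elim (fun m : ℕ => π (a ^ m * b ^ 2))
        (Sum.elim (fun p : ℕ × ℕ => π (a ^ p.1 * c ^ p.2 * b * d))
          (fun n : ℕ => π (c ^ n * d ^ 2))))) := by
  refine Nwt_eq_span ?_ fun i j l m h => ?_
  · rintro _ ⟨(i | ⟨i, l⟩ | l), rfl⟩
    · simpa using π_mem_Nwt i 2 0 0 rfl
    · have h := π_mem_Nwt (k := 2) i 1 l 1 rfl
      rwa [show a ^ i * b ^ 1 * c ^ l * d ^ 1 = a ^ i * c ^ l * b * d by ring] at h
    · simpa using π_mem_Nwt 0 0 l 2 rfl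
  · obtain ⟨rfl, rfl⟩ | ⟨rfl, rfl⟩ | ⟨rfl, rfl⟩ :
        (j = 2 ∧ m = 0) ∨ (j = 1 ∧ m = 1) ∨ (j = 0 ∧ m = 2) := by omega
    · rcases l with _ | l
      · exact Submodule.subset_span ⟨.inl i, by simp⟩
      · rw [show a ^ i * b ^ 2 * c ^ (l + 1) * d ^ 0 = a ^ i * b * c ^ l * (c * b) by ring,
          π_mul_c_mul_b]
        exact Submodule.subset_span ⟨.inr (.inl (i + 1, l)), congrArg π (by ring)⟩
    · exact Submodule.subset_span ⟨.inr (.inl (i, l)), congrArg π (by ring)⟩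
    · rcases i with _ | i
      · exact Submodule.subset_span ⟨.inr (.inr l), by simp⟩
      · rw [show a ^ (i + 1) * b ^ 0 * c ^ l * d ^ 2 = a ^ i * c ^ l * d * (a * d) by ring,
          ← π_mul_c_mul_b]
        exact Submodule.subset_span ⟨.inr (.inl (i, l + 1)), congrArg π (by ring)⟩

lemma linearIndependent_weight_zero :
    LinearIndependent (ZMod 2) (fun p : ℕ × ℕ => π (a ^ p.1 * c ^ p.2)) :=
  linearIndependent_of_tCoeff 0 id Function.injective_id fun _ =>
    tCoeff_π_of_φ_eq (by simp [φ, a, c])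

lemma linearIndependent_weight_one :
    LinearIndependent (ZMod 2) (Sum.elim (fun m : ℕ => π (a ^ m * b))
      (fun p : ℕ × ℕ => π (a ^ p.1 * c ^ p.2 * d))) := by
  refine linearIndependent_of_tCoeff 1 (Sum.elim (fun m => (m + 1, 0)) fun p => (p.1, p.2 + 1))
    (.sumElim (fun _ _ h => by simpa using h) (fun _ _ h => by simpa [Prod.ext_iff] using h)
      fun _ _ h => by simp at h) ?_
  rintro (m | p) <;> refine tCoeff_π_of_φ_eq ?_ <;> simp [φ, a, b, c, d] <;> ring

lemma linearIndependent_weight_two :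
    LinearIndependent (ZMod 2) (Sum.elim (fun m : ℕ => π (a ^ m * b ^ 2))
      (Sum.elim (fun p : ℕ × ℕ => π (a ^ p.1 * c ^ p.2 * b * d))
        (fun n : ℕ => π (c ^ n * d ^ 2)))) := by
  refine linearIndependent_of_tCoeff 2
    (Sum.elim (fun m => (m + 2, 0)) (Sum.elim (fun p => (p.1 + 1, p.2 + 1)) fun n => (0, n + 2)))
    (.sumElim (fun _ _ h => by simpa using h)
      (.sumElim (fun _ _ h => by simpa [Prod.ext_iff] using h) (fun _ _ h => by simpa using h)
        fun _ _ h => by simp at h)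
      (by rintro _ (_ | _) h <;> simp at h)) ?_
  rintro (m | p | n) <;> refine tCoeff_π_of_φ_eq ?_ <;> simp [φ, a, b, c, d] <;> ring

theorem stmt_10 :
    (Nwt 0 = Submodule.span (ZMod 2)
        (Set.range fun p : ℕ × ℕ => π (a ^ p.1 * c ^ p.2))) ∧
    (Nwt 1 = Submodule.span (ZMod 2)
        (Set.range (Sum.elim (fun m : ℕ => π (a ^ m * b))
          (fun p : ℕ × ℕ => π (a ^ p.1 * c ^ p.2 * d))))) ∧
    (Nwt 2 = Submodule.span (ZMod 2)
        (Set.range (Sum.elim (fun m : ℕ => π (a ^ m * b ^ 2))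
          (Sum.elim (fun p : ℕ × ℕ => π (a ^ p.1 * c ^ p.2 * b * d))
            (fun n : ℕ => π (c ^ n * d ^ 2)))))) ∧
    LinearIndependent (ZMod 2) (fun p : ℕ × ℕ => π (a ^ p.1 * c ^ p.2)) ∧
    LinearIndependent (ZMod 2) (Sum.elim (fun m : ℕ => π (a ^ m * b))
      (fun p : ℕ × ℕ => π (a ^ p.1 * c ^ p.2 * d))) ∧
    LinearIndependent (ZMod 2) (Sum.elim (fun m : ℕ => π (a ^ m * b ^ 2))
      (Sum.elim (fun p : ℕ × ℕ => π (a ^ p.1 * c ^ p.2 * b * d))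
        (fun n : ℕ => π (c ^ n * d ^ 2)))) :=
  ⟨Nwt_zero_eq_span, Nwt_one_eq_span, Nwt_two_eq_span, linearIndependent_weight_zero,
    linearIndependent_weight_one, linearIndependent_weight_two⟩
end
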